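/- Let η ∈ L^∞(T), {a,b} nondegenerate, and f ∈ ker S_{a,b}. Then η f ∈ ker S_{a,b} if and only if P^-(η·P^+f) = 0 and P^+(η·P^-f) = 0, i.e., f ∈ ker H_η ⊕ ker H̃_η, where H_η = P^- M_η P^+ restricted to H^2 and H̃_η = P^+ M_η P^- restricted to (H^2)^⊥. -/

import Mathlib

open MeasureTheory Complex Real AddCircle
open scoped ENNReal ComplexConjugate

noncomputable section

instance : Fact (0 < 2 * π) := ⟨by positivity⟩

/-- Normalized Haar (Lebesgue) measure on the unit circle, realized as `AddCircle (2π)`. -/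
abbrev μT : Measure (AddCircle (2 * π)) := AddCircle.haarAddCircle

/-- The Lebesgue space `L²(𝕋)`. -/
abbrev L2 : Type := Lp ℂ 2 μT

/-- The space `L^∞(𝕋)`. -/
abbrev Linf : Type := Lp ℂ ∞ μT

/-- Multiplication of an `L²` function by an `L^∞` function, as an element of `L²`. -/
def mul2 (a : Linf) (f : L2) : L2 :=
  ((Lp.memLp f).smul (Lp.memLp a)).toLp ((a : AddCircle (2 * π) → ℂ) • (f : AddCircle (2 * π) → ℂ))

lemma mul2_coe (a : Linf) (f : L2) :
    (mul2 a f : AddCircle (2 * π) → ℂ) =ᵐ[μT] fun x => a x * f x :=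
  (MemLp.coeFn_toLp _)

/-- Multiplication in `L^∞`. -/
def mulInf (a b : Linf) : Linf :=
  ((Lp.memLp b).smul (Lp.memLp a)).toLp ((a : AddCircle (2 * π) → ℂ) • (b : AddCircle (2 * π) → ℂ))

lemma mulInf_coe (a b : Linf) :
    (mulInf a b : AddCircle (2 * π) → ℂ) =ᵐ[μT] fun x => a x * b x :=
  (MemLp.coeFn_toLp _)

/-- Complex conjugation on `Lp`. -/
def conjLp {p : ℝ≥0∞} [Fact (1 ≤ p)] (f : Lp ℂ p μT) : Lp ℂ p μT :=
  MemLp.toLp (fun x => conj (f x))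
    ⟨continuous_star.comp_aestronglyMeasurable (Lp.aestronglyMeasurable f),
      by
        rw [eLpNorm_congr_norm_ae (g := (f : AddCircle (2 * π) → ℂ))
          (Filter.Eventually.of_forall fun x => by simp)]
        exact (Lp.memLp f).2⟩

lemma conjLp_coe {p : ℝ≥0∞} [Fact (1 ≤ p)] (f : Lp ℂ p μT) :
    (conjLp f : AddCircle (2 * π) → ℂ) =ᵐ[μT] fun x => conj (f x) :=
  (MemLp.coeFn_toLp _)

/-- The Hardy space `H²`, as the subspace of `L²(𝕋)` of functions whose negative Fourier
coefficients vanish. -/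
def Hardy : Submodule ℂ L2 where
  carrier := {f | ∀ n : ℤ, n < 0 → fourierBasis.repr f n = 0}
  add_mem' := fun hf hg n hn => by simp [hf n hn, hg n hn]
  zero_mem' := fun n hn => by simp
  smul_mem' := fun c f hf n hn => by simp [hf n hn]

lemma hardy_isClosed : IsClosed (Hardy : Set L2) := by
  have h : (Hardy : Set L2)
      = ⋂ n : ℤ, ⋂ _ : n < 0, {f : L2 | fourierBasis.repr f n = 0} := by
    ext f
    simp [Hardy, Set.mem_iInter]
  rw [h]
  refine isClosed_iInter fun n => isClosed_iInter fun hn => ?_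
  have hc : Continuous fun f : L2 => fourierBasis.repr f n := by
    have : (fun f : L2 => fourierBasis.repr f n)
        = fun f : L2 => (innerSL ℂ (fourierBasis n : L2)) f := by
      ext f
      rw [HilbertBasis.repr_apply_apply]
      rfl
    rw [this]
    exact (innerSL ℂ (fourierBasis n : L2)).continuous
  exact isClosed_eq hc continuous_const

instance : CompleteSpace Hardy := hardy_isClosed.completeSpace_coe

/-- The Riesz projection `P⁺ : L² → L²`, i.e. the orthogonal projection onto `H²`. -/
def Pplus : L2 →L[ℂ] L2 := Hardy.subtypeL.comp Hardy.orthogonalProjectionOnto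

/-- The complementary projection `P⁻ = I - P⁺`. -/
def Pminus : L2 →L[ℂ] L2 := ContinuousLinearMap.id ℂ L2 - Pplus

lemma mul2_norm_le (a : Linf) (f : L2) : ‖mul2 a f‖ ≤ ‖a‖ * ‖f‖ := by
  rw [mul2, Lp.norm_toLp]
  have h := eLpNorm_smul_le_eLpNorm_top_mul_eLpNorm 2
    (Lp.aestronglyMeasurable f) (φ := (a : AddCircle (2 * π) → ℂ))
  refine le_trans (ENNReal.toReal_mono ?_ h) ?_
  · exact ENNReal.mul_ne_top (Lp.memLp a).2.ne (Lp.memLp f).2.ne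
  · rw [ENNReal.toReal_mul, Lp.norm_def, Lp.norm_def]

/-- Multiplication by an `L^∞` function `a`, as a bounded operator `M_a` on `L²`. -/
def Mult (a : Linf) : L2 →L[ℂ] L2 :=
  LinearMap.mkContinuous
    { toFun := mul2 a
      map_add' := fun f g => by
        refine Lp.ext ?_
        filter_upwards [mul2_coe a (f + g), mul2_coe a f, mul2_coe a g,
          Lp.coeFn_add f g, Lp.coeFn_add (mul2 a f) (mul2 a g)] with x h1 h2 h3 h4 h5
        simp only [h1, h5, Pi.add_apply, h2, h3, h4, mul_add]
      map_smul' := fun c f => by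
        refine Lp.ext ?_
        filter_upwards [mul2_coe a (c • f), mul2_coe a f,
          Lp.coeFn_smul c f, Lp.coeFn_smul c (mul2 a f)] with x h1 h2 h3 h4
        simp only [h1, h4, Pi.smul_apply, h2, h3, smul_eq_mul, RingHom.id_apply]
        ring }
    ‖a‖ (fun f => mul2_norm_le a f)

/-- The paired operator `S_{a,b} = a P⁺ + b P⁻` on `L²(𝕋)`. -/
def pairedS (a b : Linf) : L2 →L[ℂ] L2 :=
  (Mult a).comp Pplus + (Mult b).comp Pminus

/-- The transposed paired operator `Σ_{a,b} = P⁺ a + P⁻ b` on `L²(𝕋)`. -/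
def pairedSigma (a b : Linf) : L2 →L[ℂ] L2 :=
  Pplus.comp (Mult a) + Pminus.comp (Mult b)

/-- Membership in `H^∞`: an `L^∞` function whose negative Fourier coefficients vanish. -/
def MemHinf (a : Linf) : Prop := ∀ n : ℤ, n < 0 → fourierCoeff (a : AddCircle (2 * π) → ℂ) n = 0

/-- A pair `{a,b}` is nondegenerate if `a`, `b` and `a - b` are all nonzero a.e. on `𝕋`. -/
def Nondegenerate (a b : Linf) : Prop :=
  (∀ᵐ x ∂μT, a x ≠ 0) ∧ (∀ᵐ x ∂μT, b x ≠ 0) ∧ (∀ᵐ x ∂μT, a x - b x ≠ 0)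

/-!
Write `f = f₊ + f₋` with `f₊ = P⁺f`, `f₋ = P⁻f`. Since `a` and `b` commute with `η`,
`S_{a,b}(ηf) = η S_{a,b} f + (a - b)(P⁺(ηf₋) - P⁻(ηf₊))`, so for `f ∈ ker S_{a,b}` the condition
`S_{a,b}(ηf) = 0` says `(a - b) w = 0` for `w = P⁺(ηf₋) - P⁻(ηf₊)`. As `a - b ≠ 0` a.e. this means
`w = 0`, and since `H²` and its orthogonal complement meet only in `0`, both components vanish.
-/

lemma Mult_apply (a : Linf) (f : L2) : Mult a f = mul2 a f := rfl

lemma Pminus_apply (x : L2) : Pminus x = x - Pplus x := rfl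

lemma Pplus_Pplus (x : L2) : Pplus (Pplus x) = Pplus x := by
  simp only [Pplus, ContinuousLinearMap.comp_apply, Submodule.subtypeL_apply]
  congr 1
  exact Submodule.orthogonalProjectionOnto_mem_subspace_eq_self _

lemma Pplus_Pminus (x : L2) : Pplus (Pminus x) = 0 := by
  rw [Pminus_apply, map_sub, Pplus_Pplus, sub_self]

lemma Pplus_add_Pminus (x : L2) : Pplus x + Pminus x = x := by
  rw [Pminus_apply, add_sub_cancel]

lemma Pplus_eq_Pminus_iff (x y : L2) :
    Pplus x = Pminus y ↔ Pplus x = 0 ∧ Pminus y = 0 := by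
  constructor
  · intro hxy
    have hx : Pplus x = 0 := by
      rw [← Pplus_Pplus x, hxy, Pplus_Pminus]
    exact ⟨hx, hxy ▸ hx⟩
  · rintro ⟨hx, hy⟩
    rw [hx, hy]

lemma pairedS_apply (a b : Linf) (f : L2) :
    pairedS a b f = Mult a (Pplus f) + Mult b (Pminus f) := rfl

lemma Mult_comm (a c : Linf) (x : L2) : Mult a (Mult c x) = Mult c (Mult a x) := by
  refine Lp.ext ?_
  simp only [Mult_apply]
  filter_upwards [mul2_coe a (mul2 c x), mul2_coe c x, mul2_coe c (mul2 a x),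
    mul2_coe a x] with y hac hc hca ha
  rw [hac, hc, hca, ha]
  ring

lemma Mult_sub_Mult_eq_zero_iff {a b : Linf} (hab : ∀ᵐ x ∂μT, a x - b x ≠ 0) (w : L2) :
    Mult a w - Mult b w = 0 ↔ w = 0 := by
  refine ⟨fun hw => ?_, fun hw => by rw [hw, map_zero, map_zero, sub_zero]⟩
  have hcoe : (mul2 a w : AddCircle (2 * π) → ℂ) =ᵐ[μT] (mul2 b w : AddCircle (2 * π) → ℂ) := by
    rw [← Mult_apply, ← Mult_apply, sub_eq_zero.1 hw]
  refine Lp.ext ?_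
  filter_upwards [mul2_coe a w, mul2_coe b w, hab, hcoe, Lp.coeFn_zero ℂ 2 μT]
    with y ha hb hne hab_eq h0
  rw [h0]
  rw [ha, hb] at hab_eq
  have hmul : (a y - b y) * w y = 0 := by linear_combination hab_eq
  exact (mul_eq_zero.1 hmul).resolve_left hne

lemma pairedS_mul2 (a b η : Linf) (f : L2) :
    pairedS a b (mul2 η f) = Mult η (pairedS a b f)
      + (Mult a (Pplus (mul2 η (Pminus f)) - Pminus (mul2 η (Pplus f)))
        - Mult b (Pplus (mul2 η (Pminus f)) - Pminus (mul2 η (Pplus f)))) := by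
  simp only [← Mult_apply]
  have hPplus : Pplus (Mult η f)
      = Mult η (Pplus f) - Pminus (Mult η (Pplus f)) + Pplus (Mult η (Pminus f)) := by
    conv_lhs => rw [← Pplus_add_Pminus f]
    rw [map_add, map_add, Pminus_apply (Mult η (Pplus f)), sub_sub_cancel]
  have hPminus : Pminus (Mult η f)
      = Pminus (Mult η (Pplus f)) + (Mult η (Pminus f) - Pplus (Mult η (Pminus f))) := by
    rw [Pminus_apply, hPplus]
    nth_rewrite 1 [← Pplus_add_Pminus f]
    rw [map_add, Pminus_apply (Mult η (Pplus f))]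
    abel
  rw [pairedS_apply, pairedS_apply, hPplus, hPminus]
  simp only [map_add, map_sub, Mult_comm a η, Mult_comm b η]
  abel

/-- For `η ∈ L^∞`, nondegenerate `{a,b}` and `f ∈ ker S_{a,b}`: `η f ∈ ker S_{a,b}` iff
`P⁻(η P⁺f) = 0` and `P⁺(η P⁻f) = 0` (i.e. `f ∈ ker H_η ⊕ ker H̃_η` for the Hankel
operators `H_η = P⁻ M_η P⁺`, `H̃_η = P⁺ M_η P⁻`). -/
theorem statement17 (η a b : Linf) (h : Nondegenerate a b) (f : L2)
    (hf : pairedS a b f = 0) :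
    pairedS a b (mul2 η f) = 0
      ↔ Pminus (mul2 η (Pplus f)) = 0 ∧ Pplus (mul2 η (Pminus f)) = 0 := by
  rw [pairedS_mul2, hf, map_zero, zero_add, Mult_sub_Mult_eq_zero_iff h.2.2, sub_eq_zero,
    Pplus_eq_Pminus_iff, and_comm]

end
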